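/- arXiv:2003.03214 — 2 statements merged into one kernel-verified Lean document; each statement's English description precedes it below -/
import Mathlib

section
/- Let Ω ⊂ ℝ^n be a domain and 1 ≤ p < ∞. Suppose f_k : Ω → ℝ^n are C¹ diffeomorphisms onto open subsets of ℝ^n and f_k → f in W^{1,p}(Ω, ℝ^n). Then either J_f(x) ≥ 0 for almost every x ∈ Ω or J_f(x) ≤ 0 for almost every x ∈ Ω; in particular the Jacobian of the limit cannot be positive on a set of positive measure and negative on a set of positive measure. -/
noncomputable section
open MeasureTheory Set Filter

/-- `ℝⁿ` as Euclidean space. -/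
abbrev En (n : ℕ) : Type := EuclideanSpace ℝ (Fin n)

/-- `Df` is the weak (distributional) derivative of `f` on `Ω`. -/
def IsWeakDerivOn (n : ℕ) (Ω : Set (En n)) (f : En n → En n)
    (Df : En n → En n →L[ℝ] En n) : Prop :=
  ∀ φ : En n → ℝ, ContDiff ℝ (⊤ : ℕ∞) φ → HasCompactSupport φ → tsupport φ ⊆ Ω →
    ∀ (i j : Fin n),
      ∫ x in Ω, f x j * fderiv ℝ φ x (EuclideanSpace.single i 1)
        = - ∫ x in Ω, (Df x (EuclideanSpace.single i 1)) j * φ x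

/-- `f ∈ W^{1,p}(Ω, ℝⁿ)` with weak derivative `Df`. -/
def MemW1p (n : ℕ) (p : ℝ) (Ω : Set (En n)) (f : En n → En n)
    (Df : En n → En n →L[ℝ] En n) : Prop :=
  MeasureTheory.MemLp f (ENNReal.ofReal p) (volume.restrict Ω) ∧
  MeasureTheory.MemLp Df (ENNReal.ofReal p) (volume.restrict Ω) ∧
  IsWeakDerivOn n Ω f Df

/-- `g` is a `C¹` diffeomorphism of the open set `Ω` onto an open subset of `ℝⁿ`. -/
def IsC1DiffeoOn (n : ℕ) (g : En n → En n) (Ω : Set (En n)) : Prop :=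
  ContDiffOn ℝ 1 g Ω ∧ Set.InjOn g Ω ∧ IsOpen (g '' Ω) ∧
    ∃ ginv : En n → En n, ContDiffOn ℝ 1 ginv (g '' Ω) ∧ ∀ x ∈ Ω, ginv (g x) = x

/-- The Jacobian of a `C¹` diffeomorphism onto an open set never vanishes. -/
lemma det_fderiv_ne_zero_of_diffeo {n : ℕ} {g : En n → En n} {Ω : Set (En n)}
    (hΩ : IsOpen Ω) (h : IsC1DiffeoOn n g Ω) {x : En n} (hx : x ∈ Ω) :
    (fderiv ℝ g x).det ≠ 0 := by
  obtain ⟨hcd, hinj, himg, ginv, hginv, hli⟩ := h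
  have hdx : DifferentiableAt ℝ g x :=
    ((hcd.differentiableOn one_ne_zero) x hx).differentiableAt (hΩ.mem_nhds hx)
  have hgy : DifferentiableAt ℝ ginv (g x) :=
    ((hginv.differentiableOn one_ne_zero) (g x) ⟨x, hx, rfl⟩).differentiableAt
      (himg.mem_nhds ⟨x, hx, rfl⟩)
  have hcomp : fderiv ℝ (ginv ∘ g) x = (fderiv ℝ ginv (g x)).comp (fderiv ℝ g x) :=
    fderiv_comp x hgy hdx
  have heq : (ginv ∘ g) =ᶠ[nhds x] id := by
    filter_upwards [hΩ.mem_nhds hx] with y hy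
    exact hli y hy
  have hid : fderiv ℝ (ginv ∘ g) x = fderiv ℝ (id : En n → En n) x := heq.fderiv_eq
  rw [fderiv_id] at hid
  have hdet : (1 : ℝ) = (fderiv ℝ ginv (g x)).det * (fderiv ℝ g x).det := by
    have h2 := congrArg ContinuousLinearMap.det (hid.symm.trans hcomp)
    simpa [ContinuousLinearMap.det, ContinuousLinearMap.coe_comp, LinearMap.det_comp]
      using h2
  intro h0
  rw [h0, mul_zero] at hdet
  norm_num at hdet

/-- If `C¹` diffeomorphisms `f_k : Ω → ℝⁿ` converge to `f` in `W^{1,p}(Ω, ℝⁿ)` on a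
domain `Ω`, then either `J_f ≥ 0` a.e. on `Ω` or `J_f ≤ 0` a.e. on `Ω`. -/
theorem jacobian_sign_of_diffeo_limit
    (n : ℕ) (p : ℝ) (hp : 1 ≤ p)
    (Ω : Set (En n)) (hΩopen : IsOpen Ω) (hΩconn : IsConnected Ω)
    (fk : ℕ → En n → En n) (f : En n → En n) (Df : En n → En n →L[ℝ] En n)
    (hdiffeo : ∀ k, IsC1DiffeoOn n (fk k) Ω)
    (hf : MemW1p n p Ω f Df)
    (hconv₀ : Filter.Tendsto
      (fun k => eLpNorm (fun x => fk k x - f x) (ENNReal.ofReal p) (volume.restrict Ω))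
      atTop (nhds 0))
    (hconv₁ : Filter.Tendsto
      (fun k => eLpNorm (fun x => fderiv ℝ (fk k) x - Df x) (ENNReal.ofReal p)
        (volume.restrict Ω)) atTop (nhds 0)) :
    (∀ᵐ x ∂(volume.restrict Ω), 0 ≤ (Df x).det) ∨
    (∀ᵐ x ∂(volume.restrict Ω), (Df x).det ≤ 0) := by
  have hpne : (ENNReal.ofReal p) ≠ 0 := by
    simp only [ne_eq, ENNReal.ofReal_eq_zero, not_le]
    linarith
  set μ := volume.restrict Ω with hμ
  have hcontD : ∀ k, ContinuousOn (fderiv ℝ (fk k)) Ω := fun k =>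
    (hdiffeo k).1.continuousOn_fderiv_of_isOpen hΩopen le_rfl
  have hmeas : ∀ k, AEStronglyMeasurable (fun x => fderiv ℝ (fk k) x) μ := fun k =>
    (hcontD k).aestronglyMeasurable hΩopen.measurableSet
  have hDfm : AEStronglyMeasurable Df μ := hf.2.1.aestronglyMeasurable
  have htm : TendstoInMeasure μ (fun k x => fderiv ℝ (fk k) x) atTop Df := by
    refine tendstoInMeasure_of_tendsto_eLpNorm hpne hmeas hDfm ?_
    simpa [Pi.sub_def] using hconv₁
  obtain ⟨ns, hns, hae⟩ := htm.exists_seq_tendsto_ae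
  -- constant sign of each Jacobian on the connected set Ω
  have hsign : ∀ k, (∀ x ∈ Ω, 0 ≤ (fderiv ℝ (fk k) x).det) ∨
      (∀ x ∈ Ω, (fderiv ℝ (fk k) x).det ≤ 0) := by
    intro k
    by_contra h
    push_neg at h
    obtain ⟨⟨u, hu, hu'⟩, ⟨v, hv, hv'⟩⟩ := h
    have hcont : ContinuousOn (fun x => (fderiv ℝ (fk k) x).det) Ω :=
      ContinuousLinearMap.continuous_det.comp_continuousOn (hcontD k)
    have h0 : (0 : ℝ) ∈ Icc ((fun x => (fderiv ℝ (fk k) x).det) u)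
        ((fun x => (fderiv ℝ (fk k) x).det) v) := ⟨hu'.le, hv'.le⟩
    obtain ⟨w, hw, hw0⟩ :=
      hΩconn.isPreconnected.intermediate_value hu hv hcont h0
    exact det_fderiv_ne_zero_of_diffeo hΩopen (hdiffeo k) hw hw0
  have haemem : ∀ᵐ x ∂μ, x ∈ Ω := ae_restrict_mem hΩopen.measurableSet
  by_cases hP : ∃ᶠ j in atTop, ∀ x ∈ Ω, 0 ≤ (fderiv ℝ (fk (ns j)) x).det
  · left
    filter_upwards [hae, haemem] with x hx hxΩ
    have hdet : Tendsto (fun j => (fderiv ℝ (fk (ns j)) x).det) atTop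
        (nhds (Df x).det) :=
      (ContinuousLinearMap.continuous_det.tendsto _).comp hx
    by_contra hlt
    push_neg at hlt
    have hev : ∀ᶠ j in atTop, (fderiv ℝ (fk (ns j)) x).det < 0 :=
      hdet.eventually_lt_const hlt
    obtain ⟨j, hj1, hj2⟩ := (hP.and_eventually hev).exists
    exact absurd (hj1 x hxΩ) (not_le.mpr hj2)
  · right
    have hQ : ∀ᶠ j in atTop, ∀ x ∈ Ω, (fderiv ℝ (fk (ns j)) x).det ≤ 0 := by
      have h' := not_frequently.mp hP
      filter_upwards [h'] with j hj
      rcases hsign (ns j) with h | h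
      · exact absurd h hj
      · exact h
    filter_upwards [hae, haemem] with x hx hxΩ
    have hdet : Tendsto (fun j => (fderiv ℝ (fk (ns j)) x).det) atTop
        (nhds (Df x).det) :=
      (ContinuousLinearMap.continuous_det.tendsto _).comp hx
    exact le_of_tendsto hdet (hQ.mono fun j hj => hj x hxΩ)
end
end

section
/- Let α > 0, K ∈ ℕ and n ≥ 1, and let C_{A,K}(n) ⊂ [−1,1]^n be the Cantor-type set corresponding to the sequence r̃_k(K) = 2^{−k}(1 + (K+k+1)^{−α}) / (1 + (K+1)^{−α}). Then ℒ^n(C_{A,K}(n)) = 2^n / (1 + (K+1)^{−α})^n, and there is a constant C(n,α), depending only on n and α, such that ℒ^n([−1,1]^n \ C_{A,K}(n)) ≤ C(n,α) (K+1)^{−α} for every K ∈ ℕ. -/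
noncomputable section
open MeasureTheory Set Filter

/-- The open cube `Q(c,r) = ∏ᵢ (cᵢ − r, cᵢ + r)`. -/
def openCube (n : ℕ) (c : En n) (r : ℝ) : Set (En n) := {x | ∀ i, |x i - c i| < r}

/-- The `k`-th generation `U_k^n` of the Cantor-type construction in `ℝⁿ`. -/
def cantorU (n : ℕ) (s : ℕ → ℝ) (k : ℕ) : Set (En n) :=
  ⋃ (w : Fin k → En n) (_ : ∀ j i, w j i = 1 ∨ w j i = -1),
    openCube n ((2⁻¹ : ℝ) • ∑ j : Fin k, s j.1 • w j) (s k)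

/-- The Cantor-type set `C = ⋂_{k ≥ 1} U_k^n` in `ℝⁿ` corresponding to `s`. -/
def cantorTypeSet (n : ℕ) (s : ℕ → ℝ) : Set (En n) :=
  ⋂ (k : ℕ) (_ : 1 ≤ k), cantorU n s k

/-- The sequence `r̃_k(K) = 2^{−k}(1 + (K+k+1)^{−α})/(1 + (K+1)^{−α})` defining the
fat Cantor-type set `C_{A,K}`. -/
def rA (α : ℝ) (K : ℕ) (k : ℕ) : ℝ :=
  ((2 : ℝ) ^ k)⁻¹ * (1 + ((K : ℝ) + k + 1) ^ (-α)) / (1 + ((K : ℝ) + 1) ^ (-α))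

/-!
A point lies in the Cantor-type set iff each of its coordinates lies in the one-dimensional set
`C¹ = ⋂ₖ Uₖ¹`, so everything reduces to the line. Since `2 s_{k+1} ≤ s_k`, every interval of
generation `k + 1` lies in its parent and two siblings are disjoint; hence `Uₖ¹` is a disjoint union
of `2ᵏ` intervals of length `2 sₖ`, and by continuity from above `ℒ¹(C¹) = lim 2^{k+1} sₖ`, which for
`r̃(K)` equals `2 / (1 + (K+1)^{-α})`. The bound on the complement is Bernoulli's inequality in the
form `2ⁿ - 2ⁿ / (1 + ε)ⁿ ≤ n 2ⁿ ε`.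
-/

namespace FatCantor

open Metric Topology

def signOf (b : Bool) : ℝ := if b then 1 else -1

lemma abs_signOf_sub_signOf {a b : Bool} (h : a ≠ b) : |signOf a - signOf b| = 2 := by
  cases a <;> cases b <;> simp_all [signOf] <;> norm_num

lemma signOf_eq_one_or_eq_neg_one (b : Bool) : signOf b = 1 ∨ signOf b = -1 := by
  cases b <;> simp [signOf]

lemma abs_signOf (b : Bool) : |signOf b| = 1 := by
  cases b <;> simp [signOf]

variable {s : ℕ → ℝ}

section Generations

/-- The centre `(1/2) ∑ⱼ sⱼ vⱼ` of a `k`-th generation interval, the signs `vⱼ` encoded by `b`. -/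
def center (s : ℕ → ℝ) {k : ℕ} (b : Fin k → Bool) : ℝ :=
  2⁻¹ * ∑ j : Fin k, s j * signOf (b j)

/-- The one-dimensional generation `U_k¹`. -/
def gen (s : ℕ → ℝ) (k : ℕ) : Set ℝ :=
  ⋃ b : Fin k → Bool, ball (center s b) (s k)

def cantorSet (s : ℕ → ℝ) : Set ℝ := ⋂ k, gen s k

lemma measurableSet_gen (s : ℕ → ℝ) (k : ℕ) : MeasurableSet (gen s k) :=
  .iUnion fun _ => measurableSet_ball

lemma measurableSet_cantorSet (s : ℕ → ℝ) : MeasurableSet (cantorSet s) :=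
  .iInter (measurableSet_gen s)

lemma cantorSet_subset_ball (s : ℕ → ℝ) : cantorSet s ⊆ ball 0 (s 0) := fun x hx => by
  obtain ⟨b, hb⟩ := mem_iUnion.mp (mem_iInter.mp hx 0)
  simpa [center] using hb

lemma center_eq_center_init_add {k : ℕ} (b : Fin (k + 1) → Bool) :
    center s b = center s (Fin.init b) + 2⁻¹ * s k * signOf (b (Fin.last k)) := by
  simp only [center, Fin.sum_univ_castSucc, Fin.init, Fin.val_castSucc, Fin.val_last]
  ring

lemma dist_center_init {k : ℕ} (hs : 0 ≤ s k) (b : Fin (k + 1) → Bool) :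
    dist (center s b) (center s (Fin.init b)) = s k / 2 := by
  rw [center_eq_center_init_add, Real.dist_eq, add_sub_cancel_left, abs_mul, abs_signOf,
    abs_of_nonneg (by positivity)]
  ring

variable (hpos : ∀ k, 0 < s k) (hstep : ∀ k, 2 * s (k + 1) ≤ s k)
include hpos hstep

lemma ball_subset_ball_init {k : ℕ} (b : Fin (k + 1) → Bool) :
    ball (center s b) (s (k + 1)) ⊆ ball (center s (Fin.init b)) (s k) :=
  ball_subset_ball' <| by rw [dist_center_init (hpos k).le]; linarith [hstep k]

lemma gen_succ_subset (k : ℕ) : gen s (k + 1) ⊆ gen s k :=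
  iUnion_subset fun b => (ball_subset_ball_init hpos hstep b).trans <|
    subset_iUnion (fun b' => ball (center s b') (s k)) _

lemma antitone_gen : Antitone (gen s) :=
  antitone_nat_of_succ_le (gen_succ_subset hpos hstep)

lemma pairwise_disjoint_ball (k : ℕ) :
    Pairwise fun b b' : Fin k → Bool =>
      Disjoint (ball (center s b) (s k)) (ball (center s b') (s k)) := by
  induction k with
  | zero => exact fun b b' hne => absurd (Subsingleton.elim b b') hne
  | succ k ih =>
    intro b b' hne
    by_cases hinit : Fin.init b = Fin.init b'
    · have hlast : b (Fin.last k) ≠ b' (Fin.last k) := fun h => hne <| by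
        rw [← Fin.snoc_init_self b, ← Fin.snoc_init_self b', hinit, h]
      refine ball_disjoint_ball ?_
      -- sibling intervals: centres `s k` apart, radii at most `s k / 2`
      rw [center_eq_center_init_add, center_eq_center_init_add, hinit, Real.dist_eq,
        add_sub_add_left_eq_sub, ← mul_sub, abs_mul, abs_signOf_sub_signOf hlast,
        abs_of_nonneg (by linarith [hpos k])]
      linarith [hstep k]
    · exact (ih hinit).mono (ball_subset_ball_init hpos hstep b)
        (ball_subset_ball_init hpos hstep b')

lemma volume_gen (k : ℕ) : volume (gen s k) = ENNReal.ofReal (2 ^ (k + 1) * s k) := by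
  rw [gen, measure_iUnion (pairwise_disjoint_ball hpos hstep k) fun _ => measurableSet_ball]
  simp only [Real.volume_ball, tsum_fintype, Finset.sum_const, Finset.card_univ,
    Fintype.card_fun, Fintype.card_bool, Fintype.card_fin, nsmul_eq_mul]
  rw [← ENNReal.ofReal_natCast, ← ENNReal.ofReal_mul (by positivity)]
  congr 1
  push_cast
  ring

lemma volume_cantorSet_of_tendsto {L : ℝ}
    (hL : Tendsto (fun k => 2 ^ (k + 1) * s k) atTop (𝓝 L)) :
    volume (cantorSet s) = ENNReal.ofReal L := by
  refine tendsto_nhds_unique (tendsto_measure_iInter_atTop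
    (fun k => (measurableSet_gen s k).nullMeasurableSet)
    (antitone_gen hpos hstep) ⟨0, by rw [volume_gen hpos hstep]; exact ENNReal.ofReal_ne_top⟩) ?_
  convert (ENNReal.continuous_ofReal.tendsto L).comp hL using 1
  exact funext (volume_gen hpos hstep)

end Generations

section Product

variable {ι : Type*}

lemma setOf_forall_mem_eq_preimage (t : ι → Set ℝ) :
    {x : EuclideanSpace ℝ ι | ∀ i, x i ∈ t i} = WithLp.ofLp ⁻¹' univ.pi t := by
  ext; simp

variable [Fintype ι]

lemma measurableSet_setOf_forall_mem {t : ι → Set ℝ} (ht : ∀ i, MeasurableSet (t i)) :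
    MeasurableSet {x : EuclideanSpace ℝ ι | ∀ i, x i ∈ t i} := by
  rw [setOf_forall_mem_eq_preimage]
  exact (MeasurableSet.univ_pi ht).preimage (PiLp.volume_preserving_ofLp ι).measurable

lemma volume_setOf_forall_mem {t : ι → Set ℝ} (ht : ∀ i, MeasurableSet (t i)) :
    volume {x : EuclideanSpace ℝ ι | ∀ i, x i ∈ t i} = ∏ i, volume (t i) := by
  rw [setOf_forall_mem_eq_preimage, ← volume_pi_pi]
  exact (PiLp.volume_preserving_ofLp ι).measure_preimage
    (MeasurableSet.univ_pi ht).nullMeasurableSet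

lemma volume_setOf_forall_abs_le {r : ℝ} (hr : 0 ≤ r) :
    volume {x : EuclideanSpace ℝ ι | ∀ i, |x i| ≤ r}
      = ENNReal.ofReal ((2 * r) ^ Fintype.card ι) := by
  simp_rw [abs_le, ← mem_Icc]
  rw [volume_setOf_forall_mem fun _ => measurableSet_Icc]
  simp only [Real.volume_Icc, Finset.prod_const, Finset.card_univ]
  rw [← ENNReal.ofReal_pow (by linarith)]
  ring_nf

end Product

lemma signOf_decide_eq_one {v : ℝ} (hv : v = 1 ∨ v = -1) : signOf (decide (v = 1)) = v := by
  rcases hv with rfl | rfl <;> norm_num [signOf]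

lemma cantorU_center_apply {n k : ℕ} (w : Fin k → En n) (i : Fin n) :
    ((2⁻¹ : ℝ) • ∑ j : Fin k, s j • w j) i = 2⁻¹ * ∑ j : Fin k, s j * w j i := by
  simp [WithLp.ofLp_sum, Finset.sum_apply]

lemma mem_cantorU {n k : ℕ} {x : En n} : x ∈ cantorU n s k ↔ ∀ i, x i ∈ gen s k := by
  simp only [cantorU, openCube, gen, mem_iUnion, mem_ofPred_eq, mem_ball, Real.dist_eq,
    cantorU_center_apply, center]
  constructor
  · rintro ⟨w, hw, hx⟩ i
    refine ⟨fun j => decide (w j i = 1), ?_⟩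
    simpa only [signOf_decide_eq_one (hw _ i)] using hx i
  · intro h
    choose b hb using h
    exact ⟨fun j => WithLp.toLp 2 fun i => signOf (b i j),
      fun j i => signOf_eq_one_or_eq_neg_one (b i j), hb⟩

section CantorTypeSet

variable (hpos : ∀ k, 0 < s k) (hstep : ∀ k, 2 * s (k + 1) ≤ s k) (n : ℕ)
include hpos hstep

lemma cantorTypeSet_eq : cantorTypeSet n s = {x : En n | ∀ i, x i ∈ cantorSet s} := by
  ext x
  simp only [cantorTypeSet, cantorSet, mem_iInter, mem_cantorU]
  constructor
  · intro h i k
    exact antitone_gen hpos hstep k.le_succ (h (k + 1) k.succ_pos i)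
  · intro h k _ i
    exact h i k

lemma measurableSet_cantorTypeSet : MeasurableSet (cantorTypeSet n s) := by
  rw [cantorTypeSet_eq hpos hstep]
  exact measurableSet_setOf_forall_mem fun _ => measurableSet_cantorSet s

lemma cantorTypeSet_subset : cantorTypeSet n s ⊆ {x : En n | ∀ i, |x i| ≤ s 0} := by
  rw [cantorTypeSet_eq hpos hstep]
  intro x hx i
  simpa using (mem_ball_zero_iff.mp (cantorSet_subset_ball s (hx i))).le

lemma volume_cantorTypeSet {L : ℝ} (hL : Tendsto (fun k => 2 ^ (k + 1) * s k) atTop (𝓝 L)) :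
    volume (cantorTypeSet n s) = ENNReal.ofReal (L ^ n) := by
  have hL0 : 0 ≤ L := ge_of_tendsto' hL fun k => by have := hpos k; positivity
  rw [cantorTypeSet_eq hpos hstep, volume_setOf_forall_mem fun _ => measurableSet_cantorSet s,
    Finset.prod_const, Finset.card_univ, Fintype.card_fin,
    volume_cantorSet_of_tendsto hpos hstep hL, ENNReal.ofReal_pow hL0]

end CantorTypeSet

section FatSequence

variable {α : ℝ} (K : ℕ)

lemma rA_zero : rA α K 0 = 1 := by
  have : 0 < 1 + ((K : ℝ) + 1) ^ (-α) := by positivity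
  simp [rA, this.ne']

lemma rA_pos (k : ℕ) : 0 < rA α K k := by
  unfold rA; positivity

lemma two_mul_rA_succ_le (hα : 0 ≤ α) (k : ℕ) : 2 * rA α K (k + 1) ≤ rA α K k := by
  have hmono : ((K : ℝ) + ↑(k + 1) + 1) ^ (-α) ≤ ((K : ℝ) + k + 1) ^ (-α) :=
    Real.rpow_le_rpow_of_nonpos (by positivity) (by push_cast; linarith) (by linarith)
  have hhalve : 2 * rA α K (k + 1)
      = ((2 : ℝ) ^ k)⁻¹ * (1 + ((K : ℝ) + ↑(k + 1) + 1) ^ (-α)) / (1 + ((K : ℝ) + 1) ^ (-α)) := by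
    unfold rA; rw [pow_succ]; field_simp
  rw [hhalve, rA]
  gcongr

lemma tendsto_two_pow_mul_rA (hα : 0 < α) :
    Tendsto (fun k => 2 ^ (k + 1) * rA α K k) atTop (𝓝 (2 / (1 + ((K : ℝ) + 1) ^ (-α)))) := by
  have hε : Tendsto (fun k : ℕ => ((K : ℝ) + k + 1) ^ (-α)) atTop (𝓝 0) :=
    (tendsto_rpow_neg_atTop hα).comp <| tendsto_atTop_add_const_right _ _ <|
      tendsto_atTop_add_const_left _ _ tendsto_natCast_atTop_atTop
  have hlim := ((hε.const_add 1).const_mul 2).div_const (1 + ((K : ℝ) + 1) ^ (-α))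
  rw [add_zero, mul_one] at hlim
  refine hlim.congr fun k => ?_
  unfold rA
  field_simp
  ring

end FatSequence

lemma sub_div_one_add_pow_le {c ε : ℝ} (hc : 0 ≤ c) (hε : 0 ≤ ε) (n : ℕ) :
    c - c / (1 + ε) ^ n ≤ n * c * ε := by
  have hδε : ε / (1 + ε) ≤ ε := div_le_self hε (by linarith)
  have hδ1 : ε / (1 + ε) ≤ 1 := (div_le_one₀ (by linarith)).mpr (by linarith)
  have hbern := one_add_mul_le_pow (a := -(ε / (1 + ε))) (by linarith) n
  rw [show 1 + -(ε / (1 + ε)) = (1 + ε)⁻¹ by field_simp; ring, inv_pow] at hbern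
  calc c - c / (1 + ε) ^ n = c * (1 - ((1 + ε) ^ n)⁻¹) := by ring
    _ ≤ c * (n * (ε / (1 + ε))) := by gcongr; linarith
    _ ≤ c * (n * ε) := by gcongr
    _ = n * c * ε := by ring

end FatCantor

open FatCantor in
theorem measure_fat_cantor_general
    (n : ℕ) (α : ℝ) (hα : 0 < α) :
    (∀ K : ℕ,
      volume (cantorTypeSet n (rA α K))
        = ENNReal.ofReal ((2 : ℝ) ^ n / (1 + ((K : ℝ) + 1) ^ (-α)) ^ n)) ∧
    ∃ C : ℝ, ∀ K : ℕ,
      volume ({x : En n | ∀ i, |x i| ≤ 1} \ cantorTypeSet n (rA α K))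
        ≤ ENNReal.ofReal (C * ((K : ℝ) + 1) ^ (-α)) := by
  have hstep (K : ℕ) := two_mul_rA_succ_le K hα.le
  have hvol (K : ℕ) : volume (cantorTypeSet n (rA α K))
      = ENNReal.ofReal ((2 : ℝ) ^ n / (1 + ((K : ℝ) + 1) ^ (-α)) ^ n) := by
    rw [volume_cantorTypeSet (rA_pos K) (hstep K) n (tendsto_two_pow_mul_rA K hα), div_pow]
  refine ⟨hvol, n * 2 ^ n, fun K => ?_⟩
  have hsub := cantorTypeSet_subset (rA_pos K) (hstep K) n
  rw [rA_zero] at hsub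
  have hmeas := measurableSet_cantorTypeSet (rA_pos K) (hstep K) n
  rw [measure_sdiff hsub hmeas.nullMeasurableSet (hvol K ▸ ENNReal.ofReal_ne_top),
    volume_setOf_forall_abs_le zero_le_one, hvol K,
    Fintype.card_fin, mul_one, ← ENNReal.ofReal_sub _ (by positivity)]
  exact ENNReal.ofReal_le_ofReal (sub_div_one_add_pow_le (by positivity) (by positivity) n)

/-- The measure of the fat Cantor-type set `C_{A,K}(n)`:
`ℒⁿ(C_{A,K}(n)) = 2ⁿ/(1+(K+1)^{−α})ⁿ`, and `ℒⁿ([−1,1]ⁿ \ C_{A,K}(n)) ≤ C(n,α)(K+1)^{−α}`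
for a constant depending only on `n` and `α`. -/
theorem measure_fat_cantor
    (n : ℕ) (hn : 1 ≤ n) (α : ℝ) (hα : 0 < α) :
    (∀ K : ℕ,
      volume (cantorTypeSet n (rA α K))
        = ENNReal.ofReal ((2 : ℝ) ^ n / (1 + ((K : ℝ) + 1) ^ (-α)) ^ n)) ∧
    ∃ C : ℝ, ∀ K : ℕ,
      volume ({x : En n | ∀ i, |x i| ≤ 1} \ cantorTypeSet n (rA α K))
        ≤ ENNReal.ofReal (C * ((K : ℝ) + 1) ^ (-α)) :=
  measure_fat_cantor_general n α hα
end
end
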